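/- In the 1-planted REM with parameters (μ̂ log M, σ̂ √(log M / 2), M, 1), if the SNR γ = μ̂/σ̂ satisfies γ < 1, then the probability that the planted index achieves the maximum weight tends to 0 as M → ∞; hence exact recovery is impossible. -/

import Mathlib

open Real Filter MeasureTheory ProbabilityTheory Set
open scoped NNReal Topology

/-!
Fix `c` with `μ̂ < c < σ̂` and the threshold `t = c log M`. The planted weight can only be the
largest if it exceeds `t`, which by the Chernoff bound has probability at most
`exp (-(c - μ̂)² log M / σ̂²) → 0`, or if all `M` null weights stay below `t`, which has
probability `(1 - p)^M ≤ exp (-M p)` with `p` the null tail at `t`. Bounding `p` below by the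
Gaussian density at `t + 1` gives `M p ≳ M ^ (1 - c² / σ̂²) / √(log M) → ∞`, because `c < σ̂`.
-/

/-- Probability that the planted weight `E_l ~ N(μ̂ log M, σ̂² log M/2)` is at least
the maximum of `M` independent unbiased weights `N(0, σ̂² log M/2)` (1-planted REM). -/
noncomputable def premSuccess (μHat σHat : ℝ) (M : ℕ) : ℝ :=
  (((ProbabilityTheory.gaussianReal (μHat * Real.log M)
        (Real.toNNReal (σHat ^ 2 * Real.log M / 2))).prod
      (MeasureTheory.Measure.pi fun _ : Fin M =>
        ProbabilityTheory.gaussianReal 0 (Real.toNNReal (σHat ^ 2 * Real.log M / 2))))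
    {p : ℝ × (Fin M → ℝ) | ∀ i : Fin M, p.2 i ≤ p.1}).toReal

lemma gaussianReal_real_Ici_le {m t : ℝ} {v : ℝ≥0} (hv : v ≠ 0) (hmt : m ≤ t) :
    (gaussianReal m v).real (Ici t) ≤ exp (-(t - m) ^ 2 / (2 * v)) := by
  have hv0 : (0 : ℝ) < v := by positivity
  have chernoff := measure_ge_le_exp_mul_mgf (X := id) (μ := gaussianReal m v) t
    (div_nonneg (sub_nonneg.mpr hmt) hv0.le) (integrable_exp_mul_gaussianReal _)
  rw [mgf_id_gaussianReal, ← exp_add] at chernoff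
  refine chernoff.trans_eq (congrArg exp ?_)
  field_simp
  ring

lemma gaussianPDFReal_add_one_le_real_Ioi {m t : ℝ} {v : ℝ≥0} (hv : v ≠ 0) (hmt : m ≤ t) :
    gaussianPDFReal m v (t + 1) ≤ (gaussianReal m v).real (Ioi t) := by
  have hpdf : ∀ x ∈ Ioc t (t + 1), gaussianPDFReal m v (t + 1) ≤ gaussianPDFReal m v x := by
    rintro x ⟨htx, hxt⟩
    unfold gaussianPDFReal
    gcongr
    nlinarith
  calc gaussianPDFReal m v (t + 1)
      = ∫ _ in Ioc t (t + 1), gaussianPDFReal m v (t + 1) := by simp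
    _ ≤ ∫ x in Ioc t (t + 1), gaussianPDFReal m v x :=
      setIntegral_mono_on (integrableOn_const measure_Ioc_lt_top.ne)
        (integrable_gaussianPDFReal m v).integrableOn measurableSet_Ioc hpdf
    _ ≤ ∫ x in Ioi t, gaussianPDFReal m v x :=
      setIntegral_mono_set (integrable_gaussianPDFReal m v).integrableOn
        (ae_of_all _ (gaussianPDFReal_nonneg m v)) Ioc_subset_Ioi_self.eventuallyLE
    _ = (gaussianReal m v).real (Ioi t) := by
      rw [measureReal_def, gaussianReal_apply_eq_integral _ hv, ENNReal.toReal_ofReal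
        (setIntegral_nonneg measurableSet_Ioi fun x _ => gaussianPDFReal_nonneg m v x)]

lemma measureReal_prod_pi_forall_le_fst_le {ι : Type*} [Fintype ι] (μ ν : Measure ℝ)
    [IsProbabilityMeasure μ] [IsProbabilityMeasure ν] (t : ℝ) :
    (μ.prod (Measure.pi fun _ : ι => ν)).real {p | ∀ i, p.2 i ≤ p.1} ≤
      μ.real (Ici t) + ν.real (Iic t) ^ Fintype.card ι := by
  have hsub : {p : ℝ × (ι → ℝ) | ∀ i, p.2 i ≤ p.1} ⊆
      Ici t ×ˢ univ ∪ univ ×ˢ univ.pi fun _ => Iic t := by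
    intro p hp
    rcases le_or_gt t p.1 with h | h
    · exact Or.inl ⟨h, mem_univ _⟩
    · exact Or.inr ⟨mem_univ _, fun i _ => (hp i).trans h.le⟩
  calc (μ.prod (Measure.pi fun _ : ι => ν)).real {p | ∀ i, p.2 i ≤ p.1}
      ≤ (μ.prod (Measure.pi fun _ : ι => ν)).real
          (Ici t ×ˢ univ ∪ univ ×ˢ univ.pi fun _ => Iic t) := measureReal_mono hsub
    _ ≤ _ := measureReal_union_le _ _
    _ = μ.real (Ici t) + ν.real (Iic t) ^ Fintype.card ι := by
      rw [measureReal_prod_prod, measureReal_prod_prod, probReal_univ, probReal_univ, mul_one,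
        one_mul, measureReal_def (Measure.pi _), Measure.pi_pi, Finset.prod_const,
        Finset.card_univ, ENNReal.toReal_pow, measureReal_def ν]

lemma tendsto_exp_mul_gaussianPDFReal_atTop {c σ : ℝ} (hc : c ^ 2 < σ ^ 2) :
    Tendsto (fun L => exp L * gaussianPDFReal 0 (σ ^ 2 * L / 2).toNNReal (c * L + 1))
      atTop atTop := by
  have hσ : 0 < σ ^ 2 := (sq_nonneg c).trans_lt hc
  have hα : 0 < 1 - c ^ 2 / σ ^ 2 := by rw [sub_pos, div_lt_one hσ]; exact hc
  set K := (√(π * σ ^ 2))⁻¹ / exp ((2 * c + 1) / σ ^ 2)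
  have hK : 0 < K := by positivity
  refine tendsto_atTop_mono' _ ?_
    ((tendsto_exp_mul_div_rpow_atTop (1 / 2) _ hα).const_mul_atTop hK)
  filter_upwards [eventually_ge_atTop 1] with L hL
  have hL0 : 0 < L := by linarith
  have hexponent : (1 - c ^ 2 / σ ^ 2) * L - (2 * c + 1) / σ ^ 2 ≤
      L - (c * L + 1) ^ 2 / (σ ^ 2 * L) := by
    have hdiff : L - (c * L + 1) ^ 2 / (σ ^ 2 * L) -
        ((1 - c ^ 2 / σ ^ 2) * L - (2 * c + 1) / σ ^ 2) = (L - 1) / (σ ^ 2 * L) := by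
      field_simp
      ring
    have : 0 ≤ (L - 1) / (σ ^ 2 * L) := div_nonneg (by linarith) (by positivity)
    linarith
  calc K * (exp ((1 - c ^ 2 / σ ^ 2) * L) / L ^ (1 / 2 : ℝ))
      = (√(π * σ ^ 2 * L))⁻¹ * exp ((1 - c ^ 2 / σ ^ 2) * L - (2 * c + 1) / σ ^ 2) := by
        rw [← sqrt_eq_rpow, sqrt_mul (by positivity), exp_sub]
        ring
    _ ≤ (√(π * σ ^ 2 * L))⁻¹ * exp (L - (c * L + 1) ^ 2 / (σ ^ 2 * L)) := by gcongr
    _ = _ := by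
        rw [gaussianPDFReal, coe_toNNReal _ (by positivity), sub_zero,
          show 2 * π * (σ ^ 2 * L / 2) = π * σ ^ 2 * L by ring,
          show 2 * (σ ^ 2 * L / 2) = σ ^ 2 * L by ring, neg_div, exp_neg, exp_sub]
        ring

lemma premSuccess_le {μHat σHat c : ℝ} {M : ℕ} (hσ : σHat ≠ 0) (hM : 0 < log M)
    (hμc : μHat ≤ c) (hc : 0 ≤ c) :
    premSuccess μHat σHat M ≤ exp (-((c - μHat) ^ 2 / σHat ^ 2 * log M)) +
      exp (-(M * gaussianPDFReal 0 (σHat ^ 2 * log M / 2).toNNReal (c * log M + 1))) := by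
  set L := log M
  set v := (σHat ^ 2 * L / 2).toNNReal
  have hv : (v : ℝ) = σHat ^ 2 * L / 2 := coe_toNNReal _ (by positivity)
  have hv0 : v ≠ 0 := by rw [← NNReal.coe_ne_zero, hv]; positivity
  have hplanted : (gaussianReal (μHat * L) v).real (Ici (c * L)) ≤
      exp (-((c - μHat) ^ 2 / σHat ^ 2 * L)) := by
    refine (gaussianReal_real_Ici_le hv0 (by gcongr)).trans_eq (congrArg exp ?_)
    rw [hv]
    field_simp
  have hnull : (gaussianReal 0 v).real (Iic (c * L)) ≤
      exp (-gaussianPDFReal 0 v (c * L + 1)) := by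
    rw [← compl_Ioi, probReal_compl_eq_one_sub measurableSet_Ioi]
    exact (sub_le_sub_left (gaussianPDFReal_add_one_le_real_Ioi hv0 (by positivity)) 1).trans
      (one_sub_le_exp_neg _)
  calc premSuccess μHat σHat M
      ≤ (gaussianReal (μHat * L) v).real (Ici (c * L)) +
          (gaussianReal 0 v).real (Iic (c * L)) ^ M :=
        (measureReal_prod_pi_forall_le_fst_le _ _ (c * L)).trans_eq (by rw [Fintype.card_fin])
    _ ≤ exp (-((c - μHat) ^ 2 / σHat ^ 2 * L)) +
          exp (-gaussianPDFReal 0 v (c * L + 1)) ^ M :=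
        add_le_add hplanted (pow_le_pow_left₀ measureReal_nonneg hnull M)
    _ = _ := by rw [← exp_nat_mul, mul_neg]

theorem stmt6 (μHat σHat : ℝ) (hμ : 0 < μHat) (hσ : 0 < σHat)
    (hγ : μHat / σHat < 1) :
    Tendsto (fun M : ℕ => premSuccess μHat σHat M) atTop (nhds 0) := by
  obtain ⟨c, hμc, hcσ⟩ := exists_between ((div_lt_one hσ).mp hγ)
  have hc : 0 < c := hμ.trans hμc
  have hlog : Tendsto (fun M : ℕ => log M) atTop atTop :=
    tendsto_log_atTop.comp tendsto_natCast_atTop_atTop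
  have hplanted : Tendsto (fun M : ℕ => exp (-((c - μHat) ^ 2 / σHat ^ 2 * log M)))
      atTop (𝓝 0) :=
    tendsto_exp_atBot.comp <| tendsto_neg_atTop_atBot.comp <|
      hlog.const_mul_atTop (by have := sub_pos.mpr hμc; positivity)
  have hnull : Tendsto (fun M : ℕ =>
      exp (-(M * gaussianPDFReal 0 (σHat ^ 2 * log M / 2).toNNReal (c * log M + 1))))
      atTop (𝓝 0) := by
    refine tendsto_exp_atBot.comp <| tendsto_neg_atTop_atBot.comp <|
      ((tendsto_exp_mul_gaussianPDFReal_atTop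
        (pow_lt_pow_left₀ hcσ hc.le two_ne_zero)).comp hlog).congr' ?_
    filter_upwards [eventually_gt_atTop 0] with M hM
    simp [exp_log (Nat.cast_pos.mpr hM)]
  refine squeeze_zero' (Eventually.of_forall fun M => ENNReal.toReal_nonneg) ?_
    (by simpa using hplanted.add hnull)
  filter_upwards [hlog.eventually_gt_atTop 0] with M hM
  exact premSuccess_le hσ.ne' hM hμc.le hc.le
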